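/- For every smooth 2π-periodic function a : ℝ → ℂ, the first zeta-invariant satisfies Z_1(a) = (1/3) Σ_{j∈ℤ} |j³ − j| · â_j â_{−j} = (2/3) Σ_{n=2}^{∞} (n³ − n) · â_n â_{−n}. In particular, if a is real-valued then Z_1(a) = (2/3) Σ_{n=2}^{∞} (n³ − n)|â_n|² ≥ 0. -/

import Mathlib

open scoped BigOperators

/-- `N_{j,−j} = Σ_{n∈ℤ} (|n(n+j)| − n(n+j))` (a finite sum). -/
noncomputable def N2 (j : ℤ) : ℤ :=
  ∑ᶠ n : ℤ, (|n * (n + j)| - n * (n + j))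

/-- Fourier coefficients `â_n = (1/(2π)) ∫₀^{2π} e^{-inθ} a(θ) dθ`. -/
noncomputable def fourierCoef (a : ℝ → ℂ) (n : ℤ) : ℂ :=
  (1 / (2 * Real.pi)) *
    ∫ θ in (0 : ℝ)..(2 * Real.pi), Complex.exp (-Complex.I * n * θ) * a θ

lemma sumA (k : ℕ) : (∑ i ∈ Finset.range k, (i:ℤ)) * 6 = 3*(k:ℤ)*((k:ℤ)-1) := by
  induction k with
  | zero => simp
  | succ k ih => rw [Finset.sum_range_succ]; push_cast; push_cast at ih; linarith

lemma sumB (k : ℕ) : (∑ i ∈ Finset.range k, (i:ℤ)^2) * 6 = (k:ℤ)*((k:ℤ)-1)*(2*(k:ℤ)-1) := by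
  induction k with
  | zero => simp
  | succ k ih => rw [Finset.sum_range_succ]; push_cast; push_cast at ih; nlinarith

lemma N2_natCast (k : ℕ) : N2 (k : ℤ) = ∑ i ∈ Finset.range k, 2*(i:ℤ)*((k:ℤ)-i) := by
  unfold N2
  rw [finsum_eq_sum_of_support_subset _
    (s := (Finset.range k).image (fun i : ℕ => -(i:ℤ))) ?_]
  · rw [Finset.sum_image (by intro x hx y hy h; simp only at h; omega)]
    refine Finset.sum_congr rfl fun i hi => ?_
    have hik : (i:ℤ) < k := by exact_mod_cast Finset.mem_range.mp hi
    have hx : (-(i:ℤ)) * (-(i:ℤ) + k) ≤ 0 := by nlinarith [Int.natCast_nonneg i]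
    rw [abs_of_nonpos hx]; ring
  · intro n hn
    simp only [Function.mem_support] at hn
    have hlt : n * (n + k) < 0 := by
      by_contra h
      push_neg at h
      exact hn (by rw [abs_of_nonneg h]; ring)
    have h1 : n < 0 := by nlinarith [Int.natCast_nonneg k]
    have h2 : 0 < n + k := by nlinarith
    simp only [Finset.coe_image, Set.mem_image, Finset.mem_coe, Finset.mem_range]
    exact ⟨(-n).toNat, by omega, by omega⟩

lemma N2_neg (j : ℤ) : N2 (-j) = N2 j := by
  unfold N2
  rw [← finsum_comp_equiv (Equiv.neg ℤ) (f := fun n : ℤ => |n * (n + j)| - n * (n + j))]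
  apply finsum_congr
  intro n
  simp only [Equiv.neg_apply]
  have h1 : -n * (-n + j) = n * (n + -j) := by ring
  rw [h1]

lemma cube_sub_nonneg (k : ℕ) : 0 ≤ (k:ℤ)^3 - (k:ℤ) := by
  have : k ≤ k ^ 3 := Nat.le_self_pow (by norm_num) k
  have : (k:ℤ) ≤ (k:ℤ)^3 := by exact_mod_cast this
  linarith

lemma N2_mul_three (j : ℤ) : 3 * N2 j = |j^3 - j| := by
  have key : ∀ k : ℕ, 3 * N2 (k:ℤ) = (k:ℤ)^3 - (k:ℤ) := by
    intro k
    rw [N2_natCast]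
    have h1 : ∑ i ∈ Finset.range k, 2*(i:ℤ)*((k:ℤ)-i)
        = 2*(k:ℤ) * (∑ i ∈ Finset.range k, (i:ℤ)) - 2 * ∑ i ∈ Finset.range k, (i:ℤ)^2 := by
      rw [Finset.mul_sum, Finset.mul_sum, ← Finset.sum_sub_distrib]
      exact Finset.sum_congr rfl fun i _ => by ring
    rw [h1]
    linear_combination (k:ℤ) * sumA k - sumB k
  rcases Int.natAbs_eq j with h | h
  · rw [h, key, abs_of_nonneg (cube_sub_nonneg j.natAbs)]
  · rw [h, N2_neg, key]
    have : ((-(j.natAbs:ℤ))^3 - (-(j.natAbs:ℤ))) = -((j.natAbs:ℤ)^3 - (j.natAbs:ℤ)) := by ring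
    rw [this, abs_neg, abs_of_nonneg (cube_sub_nonneg j.natAbs)]

lemma intervalIntegral_conj {f : ℝ → ℂ} {a b : ℝ} :
    (∫ x in a..b, (starRingEnd ℂ) (f x)) = (starRingEnd ℂ) (∫ x in a..b, f x) := by
  rw [intervalIntegral, intervalIntegral, integral_conj, integral_conj, ← map_sub]

lemma fourierCoef_neg_of_real (a : ℝ → ℂ) (him : ∀ θ, (a θ).im = 0) (n : ℤ) :
    fourierCoef a (-n) = (starRingEnd ℂ) (fourierCoef a n) := by
  unfold fourierCoef
  rw [map_mul, ← intervalIntegral_conj]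
  congr 1
  · norm_num [Complex.ext_iff]
  · apply intervalIntegral.integral_congr
    intro θ _
    show Complex.exp (-Complex.I * ((-n : ℤ):ℂ) * θ) * a θ
      = (starRingEnd ℂ) (Complex.exp (-Complex.I * (n:ℂ) * θ) * a θ)
    rw [map_mul, ← Complex.exp_conj]
    congr 1
    · congr 1
      push_cast
      simp [map_mul, Complex.conj_I, Complex.conj_ofReal]
    · exact (Complex.conj_eq_iff_im.mpr (him θ)).symm

/-- For a smooth `2π`-periodic `a : ℝ → ℂ`, the first zeta-invariant
`Z₁(a) = Σ_j N_{j,−j} â_j â_{−j}` satisfies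
`Z₁(a) = (1/3) Σ_{j∈ℤ} |j³−j| â_j â_{−j} = (2/3) Σ_{n≥2} (n³−n) â_n â_{−n}`;
if moreover `a` is real-valued, then
`Z₁(a) = (2/3) Σ_{n≥2} (n³−n) |â_n|² ≥ 0`. -/
theorem firstZetaInvariant_formula (a : ℝ → ℂ)
    (ha : ContDiff ℝ (⊤ : ℕ∞) a) (hper : Function.Periodic a (2 * Real.pi)) :
    (∑' j : ℤ, (N2 j : ℂ) * fourierCoef a j * fourierCoef a (-j))
      = (1 / 3) * ∑' j : ℤ,
          ((|j ^ 3 - j| : ℤ) : ℂ) * fourierCoef a j * fourierCoef a (-j) ∧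
    (∑' j : ℤ, (N2 j : ℂ) * fourierCoef a j * fourierCoef a (-j))
      = (2 / 3) * ∑' n : ℕ,
          ((((n : ℤ) + 2) ^ 3 - ((n : ℤ) + 2) : ℤ) : ℂ) *
            fourierCoef a ((n : ℤ) + 2) * fourierCoef a (-((n : ℤ) + 2)) ∧
    ((∀ θ, (a θ).im = 0) →
      (∑' j : ℤ, (N2 j : ℂ) * fourierCoef a j * fourierCoef a (-j))
        = (2 / 3) * ∑' n : ℕ,
            ((((n : ℤ) + 2) ^ 3 - ((n : ℤ) + 2) : ℤ) : ℂ) *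
              ((‖fourierCoef a ((n : ℤ) + 2)‖ ^ 2 : ℝ) : ℂ) ∧
      0 ≤ (∑' j : ℤ, (N2 j : ℂ) * fourierCoef a j * fourierCoef a (-j)).re ∧
      (∑' j : ℤ, (N2 j : ℂ) * fourierCoef a j * fourierCoef a (-j)).im = 0) := by
  classical
  set F : ℤ → ℂ := fourierCoef a with hF
  set g : ℤ → ℂ := fun j => ((|j ^ 3 - j| : ℤ) : ℂ) * F j * F (-j) with hg
  -- pointwise relation between N2-terms and g
  have hNg : ∀ j : ℤ, (N2 j : ℂ) * F j * F (-j) = (1/3) * g j := by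
    intro j
    have h3 : ((3 : ℂ)) * (N2 j : ℂ) = ((|j ^ 3 - j| : ℤ) : ℂ) := by
      exact_mod_cast congrArg (fun m : ℤ => (m : ℂ)) (N2_mul_three j)
    have hc : (N2 j : ℂ) = ((|j ^ 3 - j| : ℤ) : ℂ) / 3 := by
      field_simp
      linear_combination h3
    rw [hc]; simp only [hg]; ring
  have hL : (∑' j : ℤ, (N2 j : ℂ) * F j * F (-j)) = (1/3) * ∑' j : ℤ, g j := by
    rw [tsum_congr hNg, tsum_mul_left]
  -- symmetry of g
  have hsym : ∀ j : ℤ, g (-j) = g j := by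
    intro j
    simp only [hg]
    rw [show (-j) ^ 3 - (-j) = -(j ^ 3 - j) by ring, abs_neg, neg_neg]
    ring
  have hzero0 : g 0 = 0 := by simp [hg]
  have hzero1 : g 1 = 0 := by norm_num [hg]
  -- the ℕ-indexed tail terms
  have hg2 : ∀ n : ℕ, g ((n : ℤ) + 2)
      = ((((n : ℤ) + 2) ^ 3 - ((n : ℤ) + 2) : ℤ) : ℂ) * F ((n : ℤ) + 2) * F (-((n : ℤ) + 2)) := by
    intro n
    have hnn : 0 ≤ ((n : ℤ) + 2) ^ 3 - ((n : ℤ) + 2) := by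
      have := cube_sub_nonneg (n + 2)
      push_cast at this
      convert this using 2 <;> push_cast <;> ring
    simp only [hg, abs_of_nonneg hnn]
  -- key identity
  have key : (∑' j : ℤ, g j) = 2 * ∑' n : ℕ, g ((n : ℤ) + 2) := by
    by_cases hs : Summable g
    · have hnat : Summable (fun n : ℕ => g n) := hs.comp_injective Nat.cast_injective
      have hneg : Summable (fun n : ℕ => g (-((n : ℕ) + 1))) :=
        hs.comp_injective (fun x y h => by omega)
      have hnat1 : Summable (fun n : ℕ => g ((n : ℤ) + 1)) :=
        ((summable_nat_add_iff 1).2 hnat).congr (fun n => by push_cast; rfl)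
      have e0 : (∑' n : ℕ, g n) = ∑' n : ℕ, g ((n : ℤ) + 1) := by
        rw [Summable.tsum_eq_zero_add hnat]
        simp only [Nat.cast_zero, hzero0, zero_add]
        exact tsum_congr fun n => congrArg g (by push_cast; ring)
      have e1 : (∑' n : ℕ, g ((n : ℤ) + 1)) = ∑' n : ℕ, g ((n : ℤ) + 2) := by
        rw [Summable.tsum_eq_zero_add hnat1]
        simp only [Nat.cast_zero, zero_add, hzero1]
        exact tsum_congr fun n => congrArg g (by push_cast; ring)
      have e2 : (∑' n : ℕ, g (-((n : ℕ) + 1))) = ∑' n : ℕ, g ((n : ℤ) + 1) :=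
        tsum_congr fun n => hsym _
      rw [tsum_of_nat_of_neg_add_one hnat hneg, e2, e0, e1, two_mul]
    · have hns2 : ¬ Summable (fun n : ℕ => g ((n : ℤ) + 2)) := by
        intro h2
        have hnat : Summable (fun n : ℕ => g n) := by
          rw [← summable_nat_add_iff 2]
          exact h2.congr fun n => by push_cast; rfl
        have hneg : Summable (fun n : ℕ => g (-((n : ℕ) + 1))) := by
          have h1 : Summable (fun n : ℕ => g ((n : ℤ) + 1)) :=
            ((summable_nat_add_iff 1).2 hnat).congr (fun n => by push_cast; rfl)
          exact h1.congr fun n => (hsym _).symm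
        exact hs (hnat.of_nat_of_neg_add_one hneg)
      rw [tsum_eq_zero_of_not_summable hs, tsum_eq_zero_of_not_summable hns2, mul_zero]
  refine ⟨hL, ?_, ?_⟩
  · rw [hL, key, tsum_congr hg2]
    ring
  · intro him
    have hconj : ∀ n : ℤ, F (-n) = (starRingEnd ℂ) (F n) := fun n =>
      fourierCoef_neg_of_real a him n
    have hterm : ∀ n : ℕ,
        ((((n : ℤ) + 2) ^ 3 - ((n : ℤ) + 2) : ℤ) : ℂ) * F ((n : ℤ) + 2) * F (-((n : ℤ) + 2))
          = ((((n : ℤ) + 2) ^ 3 - ((n : ℤ) + 2) : ℤ) : ℂ) * ((‖F ((n : ℤ) + 2)‖ ^ 2 : ℝ) : ℂ) := by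
      intro n
      rw [mul_assoc, hconj, Complex.mul_conj, Complex.normSq_eq_norm_sq]
    have hmain : (∑' j : ℤ, (N2 j : ℂ) * F j * F (-j))
        = (2 / 3) * ∑' n : ℕ,
            ((((n : ℤ) + 2) ^ 3 - ((n : ℤ) + 2) : ℤ) : ℂ) * ((‖F ((n : ℤ) + 2)‖ ^ 2 : ℝ) : ℂ) := by
      rw [hL, key, tsum_congr (fun n => (hg2 n).trans (hterm n))]
      ring
    have hreal : (∑' j : ℤ, (N2 j : ℂ) * F j * F (-j))
        = ((2/3 * ∑' n : ℕ,
            ((((((n : ℤ) + 2) ^ 3 - ((n : ℤ) + 2) : ℤ) : ℝ)) * ‖F ((n : ℤ) + 2)‖ ^ 2) : ℝ) : ℂ) := by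
      rw [hmain,
        tsum_congr (fun n : ℕ =>
          show ((((n : ℤ) + 2) ^ 3 - ((n : ℤ) + 2) : ℤ) : ℂ) * ((‖F ((n : ℤ) + 2)‖ ^ 2 : ℝ) : ℂ)
            = ((((((n : ℤ) + 2) ^ 3 - ((n : ℤ) + 2) : ℤ) : ℝ) * ‖F ((n : ℤ) + 2)‖ ^ 2 : ℝ) : ℂ)
          from by push_cast; ring),
        ← Complex.ofReal_tsum]
      push_cast
      ring
    have hnn : (0:ℝ) ≤ ∑' n : ℕ,
        ((((((n : ℤ) + 2) ^ 3 - ((n : ℤ) + 2) : ℤ) : ℝ)) * ‖F ((n : ℤ) + 2)‖ ^ 2) := by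
      refine tsum_nonneg fun n => mul_nonneg ?_ (sq_nonneg _)
      have h := cube_sub_nonneg (n + 2)
      have h2 : (0:ℤ) ≤ ((n : ℤ) + 2) ^ 3 - ((n : ℤ) + 2) := by push_cast at h ⊢; convert h using 2 <;> push_cast <;> ring
      exact_mod_cast h2
    refine ⟨hmain, ?_, ?_⟩
    · rw [hreal, Complex.ofReal_re]
      have : (0:ℝ) ≤ 2/3 := by norm_num
      nlinarith
    · rw [hreal, Complex.ofReal_im]
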